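/- A closed M weight-bounded linear weighted graph G (all constraints use ≤ only) is realizable if and only if there exists a time-stamping modulo M that weakly satisfies G. -/
import Mathlib


open Finset

/-- A weighted constraint edge: `ts tgt - ts src ◁ wt` where ◁ is `<` if `strict` else `≤`. -/
structure WEdge where
  src : ℕ
  strict : Bool
  wt : ℤ
  tgt : ℕ
deriving DecidableEq

/-- `ts` satisfies the constraint of edge `e`. -/
def satEdge (ts : ℕ → ℝ) (e : WEdge) : Prop :=
  if e.strict then ts e.tgt - ts e.src < (e.wt : ℝ) else ts e.tgt - ts e.src ≤ (e.wt : ℝ)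

/-- `ts` realizes the linear weighted graph on vertices `{1,…,n}` with edge set `E`:
monotone w.r.t. the linear order and all difference constraints hold. -/
def Realizes (n : ℕ) (E : Finset WEdge) (ts : ℕ → ℝ) : Prop :=
  (∀ u v : ℕ, 1 ≤ u → u ≤ v → v ≤ n → ts u ≤ ts v) ∧ ∀ e ∈ E, satEdge ts e

/-- Integer parts of consecutive time-stamps differ by at least 0 and at most `M - 1`. -/
def SlowlyMonotone (M : ℤ) (n : ℕ) (ts : ℕ → ℝ) : Prop :=
  ∀ i : ℕ, 1 ≤ i → i < n → 0 ≤ ⌊ts (i + 1)⌋ - ⌊ts i⌋ ∧ ⌊ts (i + 1)⌋ - ⌊ts i⌋ ≤ M - 1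

/-- All edges of the graph have endpoints in `{1,…,n}`. -/
def InGraph (n : ℕ) (E : Finset WEdge) : Prop :=
  ∀ e ∈ E, 1 ≤ e.src ∧ e.src ≤ n ∧ 1 ≤ e.tgt ∧ e.tgt ≤ n

/-- `M` weight-bounded: all weights have absolute value at most `M - 1`. -/
def WtBounded (M : ℤ) (E : Finset WEdge) : Prop := ∀ e ∈ E, |e.wt| ≤ M - 1

/-- `dtsm(u,v) = (tsm v - tsm u) mod M`. -/
def dtsm (M : ℤ) (tsm : ℕ → ℤ) (u v : ℕ) : ℤ := (tsm v - tsm u) % M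

/-- `dtsm⁺(u,v)`, for `u ≤ v`: the cumulative sum of consecutive `dtsm`'s, capped at `M`. -/
def dtsmP (M : ℤ) (tsm : ℕ → ℤ) (u v : ℕ) : ℤ :=
  min M (∑ i ∈ Finset.Ico u v, dtsm M tsm i (i + 1))

/-- Antisymmetric extension of `dtsm⁺` to arbitrary pairs. -/
def dtsmE (M : ℤ) (tsm : ℕ → ℤ) (u v : ℕ) : ℤ :=
  if u ≤ v then dtsmP M tsm u v else - dtsmP M tsm v u

/-- `(u,v)` is `tsm`-big. -/
def TsmBig (M : ℤ) (tsm : ℕ → ℤ) (u v : ℕ) : Prop :=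
  ∃ w1 w2 : ℕ, u ≤ w1 ∧ w1 < w2 ∧ w2 ≤ v ∧ M ≤ dtsm M tsm u w1 + dtsm M tsm w1 w2

/-- `tsm` is a time-stamping modulo `M` on vertices `{1,…,n}`. -/
def TSM (M : ℤ) (n : ℕ) (tsm : ℕ → ℤ) : Prop :=
  ∀ v, 1 ≤ v → v ≤ n → 0 ≤ tsm v ∧ tsm v < M

/-- `tsm` weakly satisfies the graph (forward/backward conditions). -/
def WeaklySat (M : ℤ) (E : Finset WEdge) (tsm : ℕ → ℤ) : Prop :=
  ∀ e ∈ E,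
    (e.src ≤ e.tgt → ¬ TsmBig M tsm e.src e.tgt ∧ dtsm M tsm e.src e.tgt ≤ e.wt) ∧
    (e.tgt < e.src → TsmBig M tsm e.tgt e.src ∨ - e.wt ≤ dtsm M tsm e.tgt e.src)

/-- `(u,v) ∈ geqFr`: fractional part of `ts u` must be ≥ that of `ts v`. -/
def geqFr (M : ℤ) (tsm : ℕ → ℤ) (E : Finset WEdge) (u v : ℕ) : Prop :=
  (∃ e ∈ E, e.src = u ∧ e.tgt = v ∧ dtsmE M tsm u v = e.wt) ∨
  (v + 1 = u ∧ dtsmE M tsm u v = 0)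

/-- `(u,v) ∈ gtFr`: fractional part of `ts u` must be > that of `ts v`. -/
def gtFr (M : ℤ) (tsm : ℕ → ℤ) (E : Finset WEdge) (u v : ℕ) : Prop :=
  ∃ e ∈ E, e.strict = true ∧ e.src = u ∧ e.tgt = v ∧ dtsmE M tsm u v = e.wt

open Classical in
/-- Number of `gtFr` edges used by the path `p 0, p 1, …, p k`. -/
noncomputable def gtCount (M : ℤ) (tsm : ℕ → ℤ) (E : Finset WEdge) (k : ℕ) (p : ℕ → ℕ) : ℕ :=
  ((Finset.range k).filter (fun i => gtFr M tsm E (p i) (p (i + 1)))).card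

private lemma emod_self_eq {M a : ℤ} (h0 : 0 ≤ a) (h1 : a < M) : a % M = a :=
  Int.emod_eq_of_lt h0 h1

private lemma emod_le_self' {M a : ℤ} (hM : 0 < M) (ha : 0 ≤ a) : a % M ≤ a := by
  conv_rhs => rw [← Int.emod_add_mul_ediv a M]
  have h2 : 0 ≤ a / M := Int.ediv_nonneg ha hM.le
  have h3 : 0 ≤ M * (a / M) := mul_nonneg hM.le h2
  linarith

private lemma dtsm_nonneg' {M : ℤ} (hM : 0 < M) (tsm : ℕ → ℤ) (u v : ℕ) :
    0 ≤ dtsm M tsm u v :=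
  Int.emod_nonneg _ hM.ne'

private lemma dtsm_lt' {M : ℤ} (hM : 0 < M) (tsm : ℕ → ℤ) (u v : ℕ) :
    dtsm M tsm u v < M :=
  Int.emod_lt_of_pos _ hM

private lemma sum_dtsm_emod (M : ℤ) (tsm : ℕ → ℤ) {u v : ℕ} (h : u ≤ v) :
    (∑ i ∈ Finset.Ico u v, dtsm M tsm i (i+1)) % M = (tsm v - tsm u) % M := by
  induction v, h using Nat.le_induction with
  | base => simp
  | succ v hv ih =>
    rw [Finset.sum_Ico_succ_top hv, Int.add_emod, ih, dtsm,
      Int.emod_emod_of_dvd _ dvd_rfl, ← Int.add_emod]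
    congr 1; ring

private lemma sum_dtsm_nonneg' {M : ℤ} (hM : 0 < M) (tsm : ℕ → ℤ) (u v : ℕ) :
    0 ≤ ∑ i ∈ Finset.Ico u v, dtsm M tsm i (i+1) :=
  Finset.sum_nonneg fun i _ => dtsm_nonneg' hM tsm i (i+1)

private lemma dtsm_le_sum' {M : ℤ} (hM : 0 < M) (tsm : ℕ → ℤ) {u v : ℕ} (h : u ≤ v) :
    dtsm M tsm u v ≤ ∑ i ∈ Finset.Ico u v, dtsm M tsm i (i+1) := by
  set S := ∑ i ∈ Finset.Ico u v, dtsm M tsm i (i+1) with hS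
  have h1 : S % M = dtsm M tsm u v % M := by
    rw [hS, sum_dtsm_emod M tsm h, dtsm, Int.emod_emod_of_dvd _ dvd_rfl]
  have h0 : 0 ≤ S := sum_dtsm_nonneg' hM tsm u v
  have hd0 := dtsm_nonneg' hM tsm u v
  have hdM := dtsm_lt' hM tsm u v
  by_contra hc
  push_neg at hc
  have hdvd : M ∣ dtsm M tsm u v - S := Int.ModEq.dvd h1
  have := Int.le_of_dvd (by omega) hdvd
  omega

private lemma sum_dtsm_not_big {M : ℤ} (hM : 0 < M) (tsm : ℕ → ℤ) {u v : ℕ} (h : u ≤ v)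
    (hb : ¬ TsmBig M tsm u v) :
    ∑ i ∈ Finset.Ico u v, dtsm M tsm i (i+1) = dtsm M tsm u v := by
  induction v, h using Nat.le_induction with
  | base => simp [dtsm]
  | succ v hv ih =>
    have hb' : ¬ TsmBig M tsm u v := by
      rintro ⟨w1, w2, h1, h2, h3, h4⟩
      exact hb ⟨w1, w2, h1, h2, h3.trans (Nat.le_succ v), h4⟩
    rw [Finset.sum_Ico_succ_top hv, ih hb']
    have hlt : dtsm M tsm u v + dtsm M tsm v (v+1) < M := by
      by_contra h'
      exact hb ⟨v, v+1, hv, Nat.lt_succ_self v, le_rfl, le_of_not_gt h'⟩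
    have h0 : 0 ≤ dtsm M tsm u v + dtsm M tsm v (v+1) :=
      add_nonneg (dtsm_nonneg' hM tsm u v) (dtsm_nonneg' hM tsm v (v+1))
    have hmod : (dtsm M tsm u v + dtsm M tsm v (v+1)) % M = dtsm M tsm u (v+1) % M := by
      simp only [dtsm, Int.emod_emod_of_dvd _ (dvd_refl M), ← Int.add_emod]
      congr 1; ring
    rw [emod_self_eq h0 hlt,
      emod_self_eq (dtsm_nonneg' hM tsm u (v+1)) (dtsm_lt' hM tsm u (v+1))] at hmod
    exact hmod

private lemma sum_telescope' (g : ℕ → ℝ) {u v : ℕ} (h : u ≤ v) :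
    ∑ i ∈ Finset.Ico u v, (g (i+1) - g i) = g v - g u := by
  induction v, h using Nat.le_induction with
  | base => simp
  | succ v hv ih => rw [Finset.sum_Ico_succ_top hv, ih]; ring

theorem closed_realizable_iff_weaklySat (M : ℤ) (hM : 1 ≤ M) (n : ℕ) (E : Finset WEdge)
    (hG : InGraph n E) (hW : WtBounded M E) (hclosed : ∀ e ∈ E, e.strict = false) :
    (∃ ts : ℕ → ℝ, Realizes n E ts) ↔ ∃ tsm : ℕ → ℤ, TSM M n tsm ∧ WeaklySat M E tsm := by
  have hMpos : (0:ℤ) < M := by omega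
  constructor
  · rintro ⟨ts, hmono, hsat⟩
    classical
    set D : ℕ → ℝ := fun j => min (ts (j+1) - ts j) ((M : ℝ) - 1) with hD
    set ts' : ℕ → ℝ := fun v => ts 1 + ∑ j ∈ Finset.Ico 1 v, D j with hts'
    set f : ℕ → ℤ := fun v => ⌊ts' v⌋ with hf
    have hM1 : (0:ℝ) ≤ (M:ℝ) - 1 := by
      have : (1:ℝ) ≤ (M:ℝ) := by exact_mod_cast hM
      linarith
    have hD0 : ∀ j, 1 ≤ j → j < n → 0 ≤ D j := fun j h1 h2 =>
      le_min (sub_nonneg.2 (hmono j (j+1) h1 (Nat.le_succ j) h2)) hM1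
    have hDle : ∀ j, D j ≤ (M:ℝ) - 1 := fun j => min_le_right _ _
    have hts'diff : ∀ u v, 1 ≤ u → u ≤ v → ts' v - ts' u = ∑ j ∈ Finset.Ico u v, D j := by
      intro u v h1 h2
      simp only [hts']
      rw [← Finset.sum_Ico_consecutive D h1 h2]
      ring
    have hts'mono : ∀ u v, 1 ≤ u → u ≤ v → v ≤ n → ts' u ≤ ts' v := by
      intro u v h1 h2 h3
      have hd := hts'diff u v h1 h2
      have hnn : 0 ≤ ∑ j ∈ Finset.Ico u v, D j :=
        Finset.sum_nonneg fun j hj => by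
          rw [Finset.mem_Ico] at hj
          exact hD0 j (le_trans h1 hj.1) (lt_of_lt_of_le hj.2 h3)
      linarith
    have hf_mono : ∀ u v, 1 ≤ u → u ≤ v → v ≤ n → f u ≤ f v := fun u v h1 h2 h3 =>
      Int.floor_le_floor (hts'mono u v h1 h2 h3)
    have hf_step : ∀ i, 1 ≤ i → i < n → f (i+1) - f i ≤ M - 1 := by
      intro i h1 h2
      have hdiff : ts' (i+1) - ts' i = D i := by
        rw [hts'diff i (i+1) h1 (Nat.le_succ i), Nat.Ico_succ_singleton, Finset.sum_singleton]
      have hle : ts' (i+1) ≤ ts' i + ((M - 1 : ℤ) : ℝ) := by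
        push_cast
        have := hDle i
        linarith
      have h4 : f (i+1) ≤ f i + (M-1) := by
        calc f (i+1) ≤ ⌊ts' i + ((M-1:ℤ):ℝ)⌋ := Int.floor_le_floor hle
        _ = f i + (M-1) := Int.floor_add_intCast _ _
      omega
    have hedge_fwd : ∀ u v, 1 ≤ u → u ≤ v → ts' v - ts' u ≤ ts v - ts u := by
      intro u v h1 h2
      rw [hts'diff u v h1 h2]
      calc ∑ j ∈ Finset.Ico u v, D j ≤ ∑ j ∈ Finset.Ico u v, (ts (j+1) - ts j) :=
            Finset.sum_le_sum fun j _ => min_le_left _ _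
        _ = ts v - ts u := sum_telescope' ts h2
    have hedge_bwd : ∀ u v (wt : ℤ), 1 ≤ v → v < u → u ≤ n → ts v - ts u ≤ (wt:ℝ) →
        |wt| ≤ M - 1 → ((-wt : ℤ) : ℝ) ≤ ts' u - ts' v := by
      intro u v wt h1 h2 h3 h4 h5
      rw [hts'diff v u h1 h2.le]
      have hwle : ((-wt : ℤ) : ℝ) ≤ (M:ℝ) - 1 := by
        have := neg_le_abs wt
        have : -wt ≤ M - 1 := le_trans this h5
        exact_mod_cast this
      by_cases hall : ∀ j ∈ Finset.Ico v u, D j = ts (j+1) - ts j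
      · rw [Finset.sum_congr rfl hall, sum_telescope' ts h2.le]
        push_cast at h4 ⊢
        linarith
      · push_neg at hall
        obtain ⟨j, hj, hne⟩ := hall
        have hjm : D j = (M:ℝ) - 1 := by
          rcases min_cases (ts (j+1) - ts j) ((M:ℝ)-1) with ⟨h,_⟩|⟨h,_⟩
          · exact absurd h hne
          · exact h
        have hsum : (M:ℝ) - 1 ≤ ∑ j ∈ Finset.Ico v u, D j := by
          rw [← hjm]
          refine Finset.single_le_sum (f := D) ?_ hj
          intro i hi
          rw [Finset.mem_Ico] at hi
          exact hD0 i (le_trans h1 hi.1) (lt_of_lt_of_le hi.2 h3)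
        linarith
    refine ⟨fun v => f v % M, fun v _ _ =>
      ⟨Int.emod_nonneg _ hMpos.ne', Int.emod_lt_of_pos _ hMpos⟩, ?_⟩
    have hdt : ∀ a b, dtsm M (fun v => f v % M) a b = (f b - f a) % M := by
      intro a b
      simp only [dtsm]
      rw [← Int.sub_emod]
    intro e he
    obtain ⟨hs1, hs2, ht1, ht2⟩ := hG e he
    have habs := abs_le.mp (hW e he)
    have hsE : ts e.tgt - ts e.src ≤ (e.wt : ℝ) := by
      have := hsat e he
      simpa [satEdge, hclosed e he] using this
    constructor
    · intro hle
      have hd0 : 0 ≤ f e.tgt - f e.src := by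
        have := hf_mono e.src e.tgt hs1 hle ht2
        omega
      have hdle : f e.tgt - f e.src ≤ e.wt := by
        have hr : ts' e.tgt ≤ ts' e.src + ((e.wt : ℤ) : ℝ) := by
          have := hedge_fwd e.src e.tgt hs1 hle
          push_cast
          linarith
        have := Int.floor_le_floor hr
        rw [Int.floor_add_intCast] at this
        simp only [hf] at *
        omega
      have hdM : f e.tgt - f e.src < M := by omega
      constructor
      · rintro ⟨w1, w2, hw1, hw2, hw3, hw4⟩
        have ha1 : 0 ≤ f w1 - f e.src := by
          have := hf_mono e.src w1 hs1 hw1 (le_trans (le_trans hw2.le hw3) ht2)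
          omega
        have ha2 : 0 ≤ f w2 - f w1 := by
          have := hf_mono w1 w2 (le_trans hs1 hw1) hw2.le (le_trans hw3 ht2)
          omega
        have ha3 : f w2 ≤ f e.tgt := hf_mono w2 e.tgt
          (le_trans hs1 (le_trans hw1 hw2.le)) hw3 ht2
        have hb1 : dtsm M (fun v => f v % M) e.src w1 ≤ f w1 - f e.src := by
          rw [hdt]; exact emod_le_self' hMpos ha1
        have hb2 : dtsm M (fun v => f v % M) w1 w2 ≤ f w2 - f w1 := by
          rw [hdt]; exact emod_le_self' hMpos ha2
        omega
      · rw [hdt, emod_self_eq hd0 hdM]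
        exact hdle
    · intro hlt
      have hrealb : ((-e.wt : ℤ) : ℝ) ≤ ts' e.src - ts' e.tgt :=
        hedge_bwd e.src e.tgt e.wt ht1 hlt hs2 hsE (hW e he)
      have hd0 : 0 ≤ f e.src - f e.tgt := by
        have := hf_mono e.tgt e.src ht1 hlt.le hs2
        omega
      by_cases hdM : f e.src - f e.tgt < M
      · right
        rw [hdt, emod_self_eq hd0 hdM]
        have hfl : (f e.tgt + (-e.wt) : ℤ) ≤ f e.src := by
          apply Int.le_floor.mpr
          have h5 : ((f e.tgt : ℤ) : ℝ) ≤ ts' e.tgt := Int.floor_le _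
          push_cast at h5 hrealb ⊢
          linarith
        omega
      · left
        push_neg at hdM
        have hP : ∃ k, M ≤ f (e.tgt + k) - f e.tgt :=
          ⟨e.src - e.tgt, by rw [Nat.add_sub_cancel' hlt.le]; omega⟩
        have hPk0 : M ≤ f (e.tgt + Nat.find hP) - f e.tgt := Nat.find_spec hP
        set k0 := Nat.find hP with hk0
        have hk0pos : 1 ≤ k0 := by
          rcases Nat.eq_zero_or_pos k0 with h|h
          · rw [h] at hPk0; simp at hPk0; omega
          · exact h
        have hk0le : k0 ≤ e.src - e.tgt :=
          Nat.find_le (by rw [Nat.add_sub_cancel' hlt.le]; omega)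
        have hnot : ¬ M ≤ f (e.tgt + (k0 - 1)) - f e.tgt := Nat.find_min hP (by omega)
        set w1 := e.tgt + (k0 - 1) with hw1def
        set w2 := e.tgt + k0 with hw2def
        have hw12 : w2 = w1 + 1 := by omega
        have hw2u : w2 ≤ e.src := by omega
        have hw1n : w1 < n := by omega
        have ha0 : 0 ≤ f w1 - f e.tgt := by
          have := hf_mono e.tgt w1 ht1 (by omega) (by omega)
          omega
        have haM : f w1 - f e.tgt < M := by omega
        have hb0 : 0 ≤ f w2 - f w1 := by
          have := hf_mono w1 w2 (by omega) (by omega) (by omega)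
          omega
        have hbM : f w2 - f w1 ≤ M - 1 := by
          have := hf_step w1 (by omega) hw1n
          rw [hw12]
          omega
        refine ⟨w1, w2, by omega, by omega, hw2u, ?_⟩
        rw [hdt, hdt, emod_self_eq ha0 haM, emod_self_eq hb0 (by omega)]
        omega
  · rintro ⟨tsm, htsm, hws⟩
    refine ⟨fun v => ((∑ i ∈ Finset.Ico 1 v, dtsm M tsm i (i+1) : ℤ) : ℝ), ?_, ?_⟩
    · intro u v _ huv _
      have hsub : Finset.Ico 1 u ⊆ Finset.Ico 1 v := Finset.Ico_subset_Ico le_rfl huv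
      dsimp only
      exact_mod_cast Finset.sum_le_sum_of_subset_of_nonneg hsub
        fun i _ _ => dtsm_nonneg' hMpos tsm i (i+1)
    · intro e he
      obtain ⟨hs1, hs2, ht1, ht2⟩ := hG e he
      have hws' := hws e he
      have habs := abs_le.mp (hW e he)
      simp only [satEdge, hclosed e he, Bool.false_eq_true, if_false]
      rcases le_or_gt e.src e.tgt with h | h
      · obtain ⟨hnb, hle⟩ := hws'.1 h
        have hsplit : (∑ i ∈ Finset.Ico 1 e.tgt, dtsm M tsm i (i+1))
            = (∑ i ∈ Finset.Ico 1 e.src, dtsm M tsm i (i+1))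
              + ∑ i ∈ Finset.Ico e.src e.tgt, dtsm M tsm i (i+1) :=
          (Finset.sum_Ico_consecutive _ hs1 h).symm
        have hkey := sum_dtsm_not_big hMpos tsm h hnb
        have hZ : (∑ i ∈ Finset.Ico 1 e.tgt, dtsm M tsm i (i+1))
            - (∑ i ∈ Finset.Ico 1 e.src, dtsm M tsm i (i+1)) ≤ e.wt := by
          rw [hsplit]
          omega
        exact_mod_cast hZ
      · have hws2 := hws'.2 h
        have hsplit : (∑ i ∈ Finset.Ico 1 e.src, dtsm M tsm i (i+1))
            = (∑ i ∈ Finset.Ico 1 e.tgt, dtsm M tsm i (i+1))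
              + ∑ i ∈ Finset.Ico e.tgt e.src, dtsm M tsm i (i+1) :=
          (Finset.sum_Ico_consecutive _ ht1 h.le).symm
        have hkey : -e.wt ≤ ∑ i ∈ Finset.Ico e.tgt e.src, dtsm M tsm i (i+1) := by
          rcases hws2 with hbig | hle
          · obtain ⟨w1, w2, ha, hb, hc, hd⟩ := hbig
            have s1 : (∑ i ∈ Finset.Ico e.tgt e.src, dtsm M tsm i (i+1))
                = ((∑ i ∈ Finset.Ico e.tgt w1, dtsm M tsm i (i+1))
                  + ∑ i ∈ Finset.Ico w1 w2, dtsm M tsm i (i+1))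
                  + ∑ i ∈ Finset.Ico w2 e.src, dtsm M tsm i (i+1) := by
              rw [add_assoc, Finset.sum_Ico_consecutive _ hb.le hc,
                Finset.sum_Ico_consecutive _ ha (hb.le.trans hc)]
            have e1 := dtsm_le_sum' hMpos tsm ha
            have e2 := dtsm_le_sum' hMpos tsm hb.le
            have e3 := sum_dtsm_nonneg' hMpos tsm w2 e.src
            omega
          · have := dtsm_le_sum' hMpos tsm h.le
            omega
        have hZ : (∑ i ∈ Finset.Ico 1 e.tgt, dtsm M tsm i (i+1))
            - (∑ i ∈ Finset.Ico 1 e.src, dtsm M tsm i (i+1)) ≤ e.wt := by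
          rw [hsplit]
          omega
        exact_mod_cast hZ
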